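/- arXiv:0907.3692 — 3 statements merged into one kernel-verified Lean document; each statement's English description precedes it below -/
import Mathlib

section
/- Let $(A_0,A_1)$ and $(B_0,B_1)$ be Banach couples with $A_0\subset A_1$, and let $T:A_1\to B_1$ satisfy $T(A_0)\subset B_0$ with $\|Ta\|_{B_0}\le C_0\|a\|_{A_0}$ for all $a\in A_0$, and $\|Ta-Ta'\|_{B_1}\le C_1\|a-a'\|_{A_1}$ for all $a,a'\in A_1$. Then for each $\theta\in(0,1)$ and $p\in[1,\infty]$, $T$ maps $(A_0,A_1)_{\theta,p}$ into $(B_0,B_1)_{\theta,p}$ and $\|Ta\|_{(B_0,B_1)_{\theta,p}}\le C_0^{1-\theta}C_1^{\theta}\|a\|_{(A_0,A_1)_{\theta,p}}$ for all $a\in(A_0,A_1)_{\theta,p}$. -/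
open scoped ENNReal
open Filter Topology MeasureTheory

/-- A member of a Banach couple, modeled as an extended-real-valued norm on a common
ambient real vector space `X`; the space itself is `{x | N x < ∞}`.  The `complete`
field expresses that this space is a Banach space. -/
structure CoupleNorm (X : Type*) [AddCommGroup X] [Module ℝ X] where
  N : X → ℝ≥0∞
  zero : N 0 = 0
  add_le : ∀ x y, N (x + y) ≤ N x + N y
  smul_eq : ∀ (c : ℝ) (x : X), N (c • x) = ENNReal.ofReal |c| * N x
  definite : ∀ x, N x = 0 → x = 0
  complete : ∀ u : ℕ → X, (∀ n, N (u n) < ∞) →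
    (∀ ε : ℝ≥0∞, 0 < ε → ∃ n0, ∀ m n, n0 ≤ m → n0 ≤ n → N (u m - u n) < ε) →
    ∃ x, Tendsto (fun n => N (u n - x)) atTop (𝓝 0)

namespace CoupleNorm

variable {X : Type*} [AddCommGroup X] [Module ℝ X]

/-- The Peetre K-functional of the couple `(N0, N1)`. -/
noncomputable def Kfun (N0 N1 : CoupleNorm X) (t : ℝ) (x : X) : ℝ≥0∞ :=
  ⨅ y : X, N0.N y + ENNReal.ofReal t * N1.N (x - y)

/-- The measure dt/t on (0,∞). -/
noncomputable def haarMeas : Measure ℝ :=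
  (volume.restrict (Set.Ioi (0 : ℝ))).withDensity fun t => ENNReal.ofReal t⁻¹

/-- The real interpolation norm `(θ, p)`, for `p ∈ [1,∞]`, as an extended real. -/
noncomputable def interpNorm (N0 N1 : CoupleNorm X) (θ : ℝ) (p : ℝ≥0∞) (x : X) : ℝ≥0∞ :=
  if p = ∞ then ⨆ t : {t : ℝ // 0 < t}, (ENNReal.ofReal t.1) ^ (-θ) * Kfun N0 N1 t.1 x
  else (∫⁻ t, ((ENNReal.ofReal t) ^ (-θ) * Kfun N0 N1 t x) ^ p.toReal ∂haarMeas) ^ (1 / p.toReal)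

/-- `N0 ⊂ N1`: continuous embedding (the inclusion of domains is then automatic). -/
def Embeds (N0 N1 : CoupleNorm X) : Prop :=
  ∃ c : ℝ, 0 < c ∧ ∀ x, N1.N x ≤ ENNReal.ofReal c * N0.N x

/-- A set bounded with respect to a generalized norm. -/
def BddWith (NN : X → ℝ≥0∞) (S : Set X) : Prop :=
  ∃ R : ℝ, ∀ x ∈ S, NN x ≤ ENNReal.ofReal R

/-- Sequential relative compactness with respect to a generalized norm. -/
def RelCompactWith (NN : X → ℝ≥0∞) (S : Set X) : Prop :=
  ∀ u : ℕ → X, (∀ n, u n ∈ S) →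
    ∃ (σ : ℕ → ℕ) (x : X), StrictMono σ ∧
      Tendsto (fun n => NN (u (σ n) - x)) atTop (𝓝 0)

/-- Sequential compactness (with limits inside the set) w.r.t. a generalized norm. -/
def CompactWith (NN : X → ℝ≥0∞) (S : Set X) : Prop :=
  ∀ u : ℕ → X, (∀ n, u n ∈ S) →
    ∃ x ∈ S, ∃ σ : ℕ → ℕ, StrictMono σ ∧
      Tendsto (fun n => NN (u (σ n) - x)) atTop (𝓝 0)

end CoupleNorm

/-!
A map which is bounded `A0 → B0` and Lipschitz `A1 → B1` satisfies
`K(t, Ta; B0, B1) ≤ C0 K((C1/C0) t, a; A0, A1)`: split `a = y + (a - y)` and compare with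
`Ta = Ty + (Ta - Ty)`. Weighting by `t^(-θ)` turns the factor `C1/C0` in front of `t` into
the constant `C0 (C1/C0)^θ = C0^(1-θ) C1^θ`, because the measure `dt/t` is invariant under
dilations `t ↦ s t`.
-/

open ENNReal

namespace CoupleNorm

variable {X Y : Type*} [AddCommGroup X] [Module ℝ X] [AddCommGroup Y] [Module ℝ Y]

lemma N_neg (N0 : CoupleNorm X) (x : X) : N0.N (-x) = N0.N x := by
  rw [← neg_one_smul ℝ x, N0.smul_eq, abs_neg, abs_one, ofReal_one, one_mul]

lemma N_sub_eq_top (N0 : CoupleNorm X) {x y : X} (hx : N0.N x < ∞) (hy : N0.N y = ∞) :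
    N0.N (x - y) = ∞ := by
  by_contra hxy
  have : N0.N y ≤ N0.N x + N0.N (x - y) := by
    have := N0.add_le x (-(x - y))
    rwa [N0.N_neg, ← sub_eq_add_neg, _root_.sub_sub_cancel] at this
  exact hy ▸ this |>.not_gt (add_lt_top.2 ⟨hx, lt_top_iff_ne_top.2 hxy⟩)

theorem Kfun_map_le {A0 A1 : CoupleNorm X} {B0 B1 : CoupleNorm Y} {T : X → Y} {C0 C1 : ℝ}
    (hC0 : 0 < C0) (hC1 : 0 < C1)
    (hT0 : ∀ a : X, B0.N (T a) ≤ ENNReal.ofReal C0 * A0.N a)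
    (hT1 : ∀ a a' : X, A1.N a < ∞ → A1.N a' < ∞ →
      B1.N (T a - T a') ≤ ENNReal.ofReal C1 * A1.N (a - a'))
    {a : X} (ha : A1.N a < ∞) {t : ℝ} (ht : 0 < t) :
    Kfun B0 B1 t (T a) ≤ ENNReal.ofReal C0 * Kfun A0 A1 (C1 / C0 * t) a := by
  rw [Kfun, Kfun, mul_iInf_of_ne (ofReal_pos.2 hC0).ne' ofReal_ne_top]
  refine le_iInf fun y => ?_
  by_cases hy : A1.N y = ∞
  -- then `a - y` lies outside `A1` as well, so `y` costs `∞` in `K(s t, a)`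
  · rw [A1.N_sub_eq_top ha hy, mul_top (ofReal_pos.2 (by positivity)).ne', add_top,
      mul_top (ofReal_pos.2 hC0).ne']
    exact le_top
  · refine (iInf_le _ (T y)).trans ?_
    rw [mul_add]
    refine add_le_add (hT0 y) ?_
    calc ENNReal.ofReal t * B1.N (T a - T y)
        ≤ ENNReal.ofReal t * (ENNReal.ofReal C1 * A1.N (a - y)) := by
          gcongr
          exact hT1 a y ha (lt_top_iff_ne_top.2 hy)
      _ = ENNReal.ofReal C0 * (ENNReal.ofReal (C1 / C0 * t) * A1.N (a - y)) := by
          rw [← mul_assoc, ← mul_assoc, ← ofReal_mul ht.le, ← ofReal_mul hC0.le]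
          congr 2
          field_simp

lemma ae_haarMeas_pos : ∀ᵐ t ∂haarMeas, 0 < t :=
  (withDensity_absolutelyContinuous _ _).ae_le (ae_restrict_mem measurableSet_Ioi)

lemma lintegral_haarMeas_comp_mul_left (h : ℝ → ℝ≥0∞) {s : ℝ} (hs : 0 < s) :
    ∫⁻ t, h (s * t) ∂haarMeas = ∫⁻ t, h t ∂haarMeas := by
  set w : ℝ → ℝ≥0∞ := fun t => ENNReal.ofReal t⁻¹
  have hw : Measurable w := measurable_ofReal.comp measurable_inv
  have hwt : ∀ᵐ t ∂volume.restrict (Set.Ioi (0 : ℝ)), w t < ∞ :=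
    ae_of_all _ fun _ => ofReal_lt_top
  have hdil : ∀ t, w t = ENNReal.ofReal s * w (s * t) := fun t => by
    rw [← ofReal_mul hs.le, mul_inv, ← mul_assoc, mul_inv_cancel₀ hs.ne', one_mul]
  have hemb := measurableEmbedding_mulLeft₀ hs.ne'
  have hmap : (volume.restrict (Set.Ioi (0 : ℝ))).map (s * ·) =
      ENNReal.ofReal s⁻¹ • volume.restrict (Set.Ioi 0) := by
    conv_lhs => rw [← zero_div s, ← Set.preimage_const_mul_Ioi₀ 0 hs]
    rw [← hemb.restrict_map, Real.map_volume_mul_left hs.ne', Measure.restrict_smul,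
      abs_of_pos (inv_pos.2 hs)]
  rw [haarMeas, lintegral_withDensity_eq_lintegral_mul_non_measurable _ hw hwt,
    lintegral_withDensity_eq_lintegral_mul_non_measurable _ hw hwt]
  have hintegrand : (w * fun t => h (s * t)) = fun t => ENNReal.ofReal s * (w (s * t) * h (s * t)) :=
    funext fun t => by rw [Pi.mul_apply, hdil t, mul_assoc]
  rw [hintegrand, lintegral_const_mul' _ _ ofReal_ne_top,
    ← hemb.lintegral_map (fun u => w u * h u), hmap, lintegral_smul_measure, smul_eq_mul,
    ← mul_assoc, ← ofReal_mul hs.le, mul_inv_cancel₀ hs.ne', ofReal_one, one_mul]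
  rfl

/-- The `L^p(dt/t)` norm on `(0, ∞)`, with the supremum (rather than the essential supremum)
for `p = ∞`, as in `interpNorm`. -/
noncomputable def haarLpNorm (p : ℝ≥0∞) (F : ℝ → ℝ≥0∞) : ℝ≥0∞ :=
  if p = ∞ then ⨆ t : {t : ℝ // 0 < t}, F t.1
  else (∫⁻ t, F t ^ p.toReal ∂haarMeas) ^ (1 / p.toReal)

lemma interpNorm_eq_haarLpNorm (N0 N1 : CoupleNorm X) (θ : ℝ) (p : ℝ≥0∞) (x : X) :
    interpNorm N0 N1 θ p x =
      haarLpNorm p (fun t => ENNReal.ofReal t ^ (-θ) * Kfun N0 N1 t x) :=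
  rfl

lemma haarLpNorm_mono {p : ℝ≥0∞} {F G : ℝ → ℝ≥0∞} (hFG : ∀ t, 0 < t → F t ≤ G t) :
    haarLpNorm p F ≤ haarLpNorm p G := by
  unfold haarLpNorm
  split_ifs
  · exact iSup_mono fun t => hFG t.1 t.2
  · refine rpow_le_rpow (lintegral_mono_ae (ae_haarMeas_pos.mono fun t ht => ?_)) (by positivity)
    exact rpow_le_rpow (hFG t ht) toReal_nonneg

lemma haarLpNorm_const_mul {p : ℝ≥0∞} (hp : p ≠ 0) {c : ℝ≥0∞} (hc : c ≠ ∞) (F : ℝ → ℝ≥0∞) :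
    haarLpNorm p (fun t => c * F t) = c * haarLpNorm p F := by
  unfold haarLpNorm
  split_ifs with hpt
  · exact (mul_iSup _ _).symm
  · have hpr : 0 < p.toReal := toReal_pos hp hpt
    simp only [mul_rpow_of_nonneg _ _ hpr.le]
    rw [lintegral_const_mul' _ _ (rpow_ne_top_of_nonneg hpr.le hc),
      mul_rpow_of_nonneg _ _ (by positivity), ← rpow_mul, mul_one_div_cancel hpr.ne', rpow_one]

lemma haarLpNorm_comp_mul_left (p : ℝ≥0∞) (F : ℝ → ℝ≥0∞) {s : ℝ} (hs : 0 < s) :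
    haarLpNorm p (fun t => F (s * t)) = haarLpNorm p F := by
  unfold haarLpNorm
  split_ifs
  · refine le_antisymm (iSup_le fun t => le_iSup_of_le ⟨s * t.1, mul_pos hs t.2⟩ le_rfl)
      (iSup_le fun t => le_iSup_of_le ⟨t.1 / s, div_pos t.2 hs⟩ ?_)
    exact (congrArg F (mul_div_cancel₀ t.1 hs.ne')).ge
  · rw [lintegral_haarMeas_comp_mul_left (fun t => F t ^ p.toReal) hs]

end CoupleNorm

lemma ofReal_rpow_neg_mul_ofReal_eq {C0 C1 t : ℝ} (hC0 : 0 < C0) (hC1 : 0 < C1) (ht : 0 < t)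
    (θ : ℝ) :
    ENNReal.ofReal t ^ (-θ) * ENNReal.ofReal C0 =
      ENNReal.ofReal (C0 ^ (1 - θ) * C1 ^ θ) * ENNReal.ofReal (C1 / C0 * t) ^ (-θ) := by
  rw [ofReal_rpow_of_pos ht, ofReal_rpow_of_pos (by positivity), ← ofReal_mul (by positivity),
    ← ofReal_mul (by positivity)]
  congr 1
  rw [Real.mul_rpow (by positivity) ht.le, Real.rpow_neg ht.le, Real.rpow_neg (div_pos hC1 hC0).le,
    Real.div_rpow hC1.le hC0.le, Real.rpow_sub hC0, Real.rpow_one]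
  have := Real.rpow_pos_of_pos hC0 θ
  have := Real.rpow_pos_of_pos hC1 θ
  field_simp

open CoupleNorm

theorem stmt1_general {X Y : Type*} [AddCommGroup X] [Module ℝ X] [AddCommGroup Y] [Module ℝ Y]
    (A0 A1 : CoupleNorm X) (B0 B1 : CoupleNorm Y)
    (T : X → Y) (C0 C1 : ℝ) (hC0 : 0 < C0) (hC1 : 0 < C1)
    (hT0 : ∀ a : X, B0.N (T a) ≤ ENNReal.ofReal C0 * A0.N a)
    (hT1 : ∀ a a' : X, A1.N a < ∞ → A1.N a' < ∞ →
      B1.N (T a - T a') ≤ ENNReal.ofReal C1 * A1.N (a - a')) :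
    ∀ θ : ℝ, 0 < θ → θ < 1 → ∀ p : ℝ≥0∞, 1 ≤ p →
      ∀ a : X, A1.N a < ∞ →
        CoupleNorm.interpNorm B0 B1 θ p (T a) ≤
          ENNReal.ofReal (C0 ^ (1 - θ) * C1 ^ θ) * CoupleNorm.interpNorm A0 A1 θ p a := by
  intro θ _ _ p hp a ha
  set s := C1 / C0
  set G : ℝ → ℝ≥0∞ := fun t => ENNReal.ofReal t ^ (-θ) * Kfun A0 A1 t a
  have hweighted : ∀ t, 0 < t → ENNReal.ofReal t ^ (-θ) * Kfun B0 B1 t (T a) ≤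
      ENNReal.ofReal (C0 ^ (1 - θ) * C1 ^ θ) * G (s * t) := fun t ht =>
    calc ENNReal.ofReal t ^ (-θ) * Kfun B0 B1 t (T a)
        ≤ ENNReal.ofReal t ^ (-θ) * (ENNReal.ofReal C0 * Kfun A0 A1 (s * t) a) := by
          gcongr
          exact Kfun_map_le hC0 hC1 hT0 hT1 ha ht
      _ = _ := by rw [← mul_assoc, ofReal_rpow_neg_mul_ofReal_eq hC0 hC1 ht, mul_assoc]
  calc interpNorm B0 B1 θ p (T a)
      ≤ haarLpNorm p (fun t => ENNReal.ofReal (C0 ^ (1 - θ) * C1 ^ θ) * G (s * t)) :=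
        haarLpNorm_mono hweighted
    _ = ENNReal.ofReal (C0 ^ (1 - θ) * C1 ^ θ) * interpNorm A0 A1 θ p a := by
        rw [haarLpNorm_const_mul (one_pos.trans_le hp).ne' ofReal_ne_top,
          haarLpNorm_comp_mul_left p G (div_pos hC1 hC0), interpNorm_eq_haarLpNorm]

/-- nonlinear interpolation theorem with constant `C0^(1-θ) C1^θ`. -/
theorem stmt1 {X Y : Type*} [AddCommGroup X] [Module ℝ X] [AddCommGroup Y] [Module ℝ Y]
    (A0 A1 : CoupleNorm X) (B0 B1 : CoupleNorm Y)
    (hA : CoupleNorm.Embeds A0 A1)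
    (T : X → Y) (C0 C1 : ℝ) (hC0 : 0 < C0) (hC1 : 0 < C1)
    (hT0 : ∀ a : X, B0.N (T a) ≤ ENNReal.ofReal C0 * A0.N a)
    (hT1 : ∀ a a' : X, A1.N a < ∞ → A1.N a' < ∞ →
      B1.N (T a - T a') ≤ ENNReal.ofReal C1 * A1.N (a - a')) :
    ∀ θ : ℝ, 0 < θ → θ < 1 → ∀ p : ℝ≥0∞, 1 ≤ p →
      ∀ a : X, A1.N a < ∞ →
        CoupleNorm.interpNorm B0 B1 θ p (T a) ≤
          ENNReal.ofReal (C0 ^ (1 - θ) * C1 ^ θ) * CoupleNorm.interpNorm A0 A1 θ p a :=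
  stmt1_general A0 A1 B0 B1 T C0 C1 hC0 hC1 hT0 hT1
end

section
/- Let $(A_0,A_1)$ be a Banach couple with $A_0\subset A_1$, let $B$ be a Banach space, and let $T:A_1\to B$ satisfy $\|Ta\|_{B}\le C_0\|a\|_{A_0}$ for all $a\in A_0$, $\|Ta-Ta'\|_{B}\le C_1\|a-a'\|_{A_1}$ for all $a,a'\in A_1$, and $T$ maps bounded subsets of $A_0$ to relatively compact subsets of $B$. Then for each $\theta\in(0,1)$ and $p\in[1,\infty]$, $T$ maps every bounded subset of $(A_0,A_1)_{\theta,p}$ to a relatively compact subset of $B$. -/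
open scoped ENNReal
open Filter Topology MeasureTheory

/-
Averaging the K-functional over `(s, 2s]` against `dt/t` shows that `‖x‖_{θ,p} ≤ r` forces
`K(s, x) ≲ r s^θ` for all `s > 0`. So for every `t > 0` we can split `x = y + (x - y)` with
`‖y‖_{A0} ≲ r t^θ` and `‖x - y‖_{A1} ≲ r t^(θ-1)`. By the Lipschitz bound, `T x` lies within
`C1 ‖x - y‖_{A1}` of `T y`, which ranges over the image of an `A0`-ball, a set with compact
closure. Since `θ < 1`, this distance tends to `0` as `t → ∞`; hence `T '' M` is totally bounded,
and its closure in the complete space `B` is compact.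
-/

open scoped NNReal
open CoupleNorm Set

theorem EMetric.totallyBounded_of_forall_exists_edist_lt {α : Type*} [PseudoEMetricSpace α]
    {s : Set α}
    (h : ∀ ε > 0, ∃ t : Set α, TotallyBounded t ∧ ∀ x ∈ s, ∃ y ∈ t, edist x y < ε) :
    TotallyBounded s := by
  refine EMetric.totallyBounded_iff.mpr fun ε hε => ?_
  obtain ⟨t, ht, hst⟩ := h (ε / 2) (ENNReal.half_pos hε.ne')
  obtain ⟨F, hF, htF⟩ := EMetric.totallyBounded_iff.mp ht (ε / 2) (ENNReal.half_pos hε.ne')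
  refine ⟨F, hF, fun x hx => ?_⟩
  obtain ⟨y, hy, hxy⟩ := hst x hx
  obtain ⟨z, hz, hyz⟩ := mem_iUnion₂.mp (htF hy)
  refine mem_iUnion₂.mpr ⟨z, hz, ?_⟩
  calc edist x z ≤ edist x y + edist y z := edist_triangle _ _ _
    _ < ε / 2 + ε / 2 := ENNReal.add_lt_add hxy hyz
    _ = ε := ENNReal.add_halves ε

theorem tendsto_mul_rpow_add_div_atTop {θ : ℝ} (hθ : θ < 1) (a b : ℝ) :
    Tendsto (fun t : ℝ => (a * t ^ θ + b) / t) atTop (𝓝 0) := by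
  have hlim : Tendsto (fun t : ℝ => a * t ^ (-(1 - θ)) + b * t⁻¹) atTop (𝓝 (a * 0 + b * 0)) :=
    ((tendsto_rpow_neg_atTop (by linarith)).const_mul a).add
      (tendsto_inv_atTop_zero.const_mul b)
  rw [mul_zero, mul_zero, add_zero] at hlim
  refine hlim.congr' ((eventually_gt_atTop 0).mono fun t ht => ?_)
  simp only [neg_sub, Real.rpow_sub_one ht.ne']
  ring

namespace CoupleNorm

variable {X : Type*} [AddCommGroup X] [Module ℝ X]

theorem Kfun_mono (A0 A1 : CoupleNorm X) (x : X) : Monotone fun t => Kfun A0 A1 t x :=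
  fun _ _ hst => iInf_mono fun _ => by gcongr

theorem inv_two_le_haarMeas_Ioc {s : ℝ} (hs : 0 < s) : 2⁻¹ ≤ haarMeas (Ioc s (2 * s)) := by
  rw [haarMeas, withDensity_apply _ measurableSet_Ioc, Measure.restrict_restrict measurableSet_Ioc,
    inter_eq_left.mpr (show Ioc s (2 * s) ⊆ Ioi 0 from fun t ht => hs.trans ht.1)]
  calc (2⁻¹ : ℝ≥0∞) = ENNReal.ofReal (2 * s)⁻¹ * volume (Ioc s (2 * s)) := by
        rw [Real.volume_Ioc, ← ENNReal.ofReal_mul (by positivity), ← ENNReal.ofReal_ofNat 2,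
          ← ENNReal.ofReal_inv_of_pos two_pos]
        congr 1
        field_simp
        ring
    _ = ∫⁻ _ in Ioc s (2 * s), ENNReal.ofReal (2 * s)⁻¹ := (setLIntegral_const _ _).symm
    _ ≤ ∫⁻ t in Ioc s (2 * s), ENNReal.ofReal t⁻¹ :=
        setLIntegral_mono' measurableSet_Ioc fun t ht =>
          ENNReal.ofReal_le_ofReal (inv_anti₀ (hs.trans ht.1) ht.2)

theorem rpow_neg_mul_Kfun_le_interpNorm (A0 A1 : CoupleNorm X) {θ : ℝ} (hθ : 0 ≤ θ)
    {p : ℝ≥0∞} (hp : 1 ≤ p) {s : ℝ} (hs : 0 < s) (x : X) :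
    ENNReal.ofReal (2 * s) ^ (-θ) * Kfun A0 A1 s x ≤ 2 * interpNorm A0 A1 θ p x := by
  by_cases hp_top : p = ∞
  · calc ENNReal.ofReal (2 * s) ^ (-θ) * Kfun A0 A1 s x
          ≤ ENNReal.ofReal (2 * s) ^ (-θ) * Kfun A0 A1 (2 * s) x := by
          gcongr
          exact Kfun_mono A0 A1 x (by linarith)
      _ ≤ interpNorm A0 A1 θ p x := by
          rw [interpNorm, if_pos hp_top]
          exact le_iSup (fun t : {t : ℝ // 0 < t} =>
            ENNReal.ofReal t.1 ^ (-θ) * Kfun A0 A1 t.1 x) ⟨2 * s, by linarith⟩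
      _ ≤ 2 * interpNorm A0 A1 θ p x := le_mul_of_one_le_left' one_le_two
  set q := p.toReal
  have hq : 1 ≤ q := by simpa using ENNReal.toReal_mono hp_top hp
  have hq0 : 0 < q := one_pos.trans_le hq
  set c := ENNReal.ofReal (2 * s) ^ (-θ) * Kfun A0 A1 s x
  have hc : ∀ t ∈ Ioc s (2 * s), c ≤ ENNReal.ofReal t ^ (-θ) * Kfun A0 A1 t x := fun t ht =>
    mul_le_mul' (by
        rw [ENNReal.rpow_neg, ENNReal.rpow_neg, ENNReal.inv_le_inv]
        exact ENNReal.rpow_le_rpow (ENNReal.ofReal_le_ofReal ht.2) hθ)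
      (Kfun_mono A0 A1 x ht.1.le)
  have hcq : c ^ q / 2 ≤ interpNorm A0 A1 θ p x ^ q :=
    calc c ^ q / 2 = c ^ q * 2⁻¹ := div_eq_mul_inv _ _
      _ ≤ c ^ q * haarMeas (Ioc s (2 * s)) := by gcongr; exact inv_two_le_haarMeas_Ioc hs
      _ = ∫⁻ _ in Ioc s (2 * s), c ^ q ∂haarMeas := (setLIntegral_const _ _).symm
      _ ≤ ∫⁻ t in Ioc s (2 * s), (ENNReal.ofReal t ^ (-θ) * Kfun A0 A1 t x) ^ q ∂haarMeas :=
          setLIntegral_mono' measurableSet_Ioc fun t ht => by gcongr; exact hc t ht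
      _ ≤ ∫⁻ t, (ENNReal.ofReal t ^ (-θ) * Kfun A0 A1 t x) ^ q ∂haarMeas :=
          setLIntegral_le_lintegral _ _
      _ = interpNorm A0 A1 θ p x ^ q := by
          rw [interpNorm, if_neg hp_top, ← ENNReal.rpow_mul, one_div_mul_cancel hq0.ne',
            ENNReal.rpow_one]
  rw [← ENNReal.rpow_le_rpow_iff hq0, ENNReal.mul_rpow_of_nonneg 2 _ hq0.le]
  calc c ^ q ≤ 2 * interpNorm A0 A1 θ p x ^ q := by
        rwa [ENNReal.div_le_iff two_ne_zero ENNReal.ofNat_ne_top, mul_comm] at hcq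
    _ ≤ 2 ^ q * interpNorm A0 A1 θ p x ^ q := by
        gcongr
        exact ENNReal.le_rpow_self_of_one_le one_le_two hq

theorem Kfun_le_of_interpNorm_le (A0 A1 : CoupleNorm X) {θ : ℝ} (hθ : 0 ≤ θ) {p : ℝ≥0∞}
    (hp : 1 ≤ p) {x : X} {r : ℝ≥0} (hx : interpNorm A0 A1 θ p x ≤ r) {s : ℝ} (hs : 0 < s) :
    Kfun A0 A1 s x ≤ ENNReal.ofReal (2 * 2 ^ θ * r * s ^ θ) := by
  have h2s : 0 < 2 * s := by linarith
  have hpos : ENNReal.ofReal (2 * s) ^ θ ≠ 0 :=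
    (ENNReal.rpow_pos (ENNReal.ofReal_pos.mpr h2s) ENNReal.ofReal_ne_top).ne'
  have hfin : ENNReal.ofReal (2 * s) ^ θ ≠ ∞ :=
    ENNReal.rpow_ne_top_of_nonneg hθ ENNReal.ofReal_ne_top
  have key := (rpow_neg_mul_Kfun_le_interpNorm A0 A1 hθ hp hs x).trans (mul_le_mul_right hx 2)
  rw [ENNReal.rpow_neg, ENNReal.inv_mul_le_iff hpos hfin] at key
  refine key.trans_eq ?_
  rw [ENNReal.ofReal_rpow_of_pos h2s, Real.mul_rpow zero_le_two hs.le, ← ENNReal.ofReal_coe_nnreal,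
    ← ENNReal.ofReal_ofNat 2, ← ENNReal.ofReal_mul zero_le_two,
    ← ENNReal.ofReal_mul (by positivity)]
  ring_nf

theorem exists_le_of_Kfun_lt (A0 A1 : CoupleNorm X) {t c : ℝ} (ht : 0 < t) {x : X}
    (h : Kfun A0 A1 t x < ENNReal.ofReal c) :
    ∃ y, A0.N y ≤ ENNReal.ofReal c ∧ A1.N (x - y) ≤ ENNReal.ofReal (c / t) := by
  obtain ⟨y, hy⟩ := iInf_lt_iff.mp h
  refine ⟨y, le_self_add.trans hy.le, ?_⟩
  rw [ENNReal.ofReal_div_of_pos ht, ENNReal.le_div_iff_mul_le (.inl (by simpa using ht))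
    (.inl ENNReal.ofReal_ne_top), mul_comm]
  exact le_add_self.trans hy.le

theorem exists_le_of_interpNorm_le (A0 A1 : CoupleNorm X) {θ : ℝ} (hθ : 0 ≤ θ) {p : ℝ≥0∞}
    (hp : 1 ≤ p) {x : X} {r : ℝ≥0} (hx : interpNorm A0 A1 θ p x ≤ r) {t : ℝ} (ht : 0 < t) :
    ∃ y, A0.N y ≤ ENNReal.ofReal (2 * 2 ^ θ * r * t ^ θ + 1) ∧
      A1.N (x - y) ≤ ENNReal.ofReal ((2 * 2 ^ θ * r * t ^ θ + 1) / t) :=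
  exists_le_of_Kfun_lt A0 A1 ht <| (Kfun_le_of_interpNorm_le A0 A1 hθ hp hx ht).trans_lt <|
    (ENNReal.ofReal_lt_ofReal_iff (by positivity)).mpr (lt_add_one _)

theorem Embeds.N_lt_top {A0 A1 : CoupleNorm X} (h : Embeds A0 A1) {x : X} (hx : A0.N x < ∞) :
    A1.N x < ∞ := by
  obtain ⟨c, -, hc⟩ := h
  exact (hc x).trans_lt (ENNReal.mul_lt_top ENNReal.ofReal_lt_top hx)

theorem N_lt_top_of_sub (A : CoupleNorm X) {x y : X} (hy : A.N y < ∞) (hxy : A.N (x - y) < ∞) :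
    A.N x < ∞ := by
  simpa using (A.add_le y (x - y)).trans_lt (ENNReal.add_lt_top.mpr ⟨hy, hxy⟩)

end CoupleNorm

theorem stmt4_general {X : Type*} [AddCommGroup X] [Module ℝ X]
    {B : Type*} [NormedAddCommGroup B] [CompleteSpace B]
    (A0 A1 : CoupleNorm X) (hA : CoupleNorm.Embeds A0 A1)
    (T : X → B) (C1 : ℝ)
    (hT1 : ∀ a a' : X, A1.N a < ∞ → A1.N a' < ∞ →
      ENNReal.ofReal ‖T a - T a'‖ ≤ ENNReal.ofReal C1 * A1.N (a - a'))
    (hcpt : ∀ S : Set X, CoupleNorm.BddWith A0.N S → IsCompact (closure (T '' S))) :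
    ∀ θ : ℝ, 0 < θ → θ < 1 → ∀ p : ℝ≥0∞, 1 ≤ p →
      ∀ M : Set X, CoupleNorm.BddWith (CoupleNorm.interpNorm A0 A1 θ p) M →
        IsCompact (closure (T '' M)) := by
  intro θ hθ0 hθ1 p hp M ⟨R, hR⟩
  set k : ℝ → ℝ := fun t => 2 * 2 ^ θ * R.toNNReal * t ^ θ + 1
  have hsmall : Tendsto (fun t => ENNReal.ofReal C1 * ENNReal.ofReal (k t / t)) atTop (𝓝 0) := by
    simpa using ENNReal.Tendsto.const_mul
      (ENNReal.tendsto_ofReal (tendsto_mul_rpow_add_div_atTop hθ1 _ 1)) (.inr ENNReal.ofReal_ne_top)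
  refine (EMetric.totallyBounded_of_forall_exists_edist_lt fun ε hε => ?_).closure
    |>.isCompact_of_isClosed isClosed_closure
  obtain ⟨t, ht0, htε⟩ := ((eventually_gt_atTop 0).and (hsmall.eventually (gt_mem_nhds hε))).exists
  refine ⟨T '' {y | A0.N y ≤ ENNReal.ofReal (k t)},
    (hcpt _ ⟨k t, fun _ hy => hy⟩).totallyBounded.subset subset_closure, ?_⟩
  rintro _ ⟨x, hx, rfl⟩
  obtain ⟨y, hy0, hxy⟩ := exists_le_of_interpNorm_le A0 A1 hθ0.le hp (hR x hx) ht0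
  have hy1 : A1.N y < ∞ := hA.N_lt_top (hy0.trans_lt ENNReal.ofReal_lt_top)
  have hx1 : A1.N x < ∞ := A1.N_lt_top_of_sub hy1 (hxy.trans_lt ENNReal.ofReal_lt_top)
  refine ⟨T y, ⟨y, hy0, rfl⟩, ?_⟩
  calc edist (T x) (T y) = ENNReal.ofReal ‖T x - T y‖ := by rw [edist_dist, dist_eq_norm]
    _ ≤ ENNReal.ofReal C1 * A1.N (x - y) := hT1 x y hx1 hy1
    _ ≤ ENNReal.ofReal C1 * ENNReal.ofReal (k t / t) := by gcongr
    _ < ε := htε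

/-- nonlinear Lions–Peetre lemma in the case `B0 = B1 = B`. -/
theorem stmt4 {X : Type*} [AddCommGroup X] [Module ℝ X]
    {B : Type*} [NormedAddCommGroup B] [NormedSpace ℝ B] [CompleteSpace B]
    (A0 A1 : CoupleNorm X) (hA : CoupleNorm.Embeds A0 A1)
    (T : X → B) (C0 C1 : ℝ) (hC0 : 0 < C0) (hC1 : 0 < C1)
    (hT0 : ∀ a : X, ENNReal.ofReal ‖T a‖ ≤ ENNReal.ofReal C0 * A0.N a)
    (hT1 : ∀ a a' : X, A1.N a < ∞ → A1.N a' < ∞ →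
      ENNReal.ofReal ‖T a - T a'‖ ≤ ENNReal.ofReal C1 * A1.N (a - a'))
    (hcpt : ∀ S : Set X, CoupleNorm.BddWith A0.N S → IsCompact (closure (T '' S))) :
    ∀ θ : ℝ, 0 < θ → θ < 1 → ∀ p : ℝ≥0∞, 1 ≤ p →
      ∀ M : Set X, CoupleNorm.BddWith (CoupleNorm.interpNorm A0 A1 θ p) M →
        IsCompact (closure (T '' M)) :=
  stmt4_general A0 A1 hA T C1 hT1 hcpt
end

section
/- Let $(\Omega,\mu)$ be a finite measure space and $1\le p_0,p_1\le\infty$ with $p_0<\infty$ or $\mu$ finite. Then the couple $(L^{p_0}(\mu),L^{p_1}(\mu))$ satisfies Persson's condition (H): for each compact subset $K$ of $L^{p_0}(\mu)$ and each $\varepsilon>0$ there exists a linear operator $P$, given by conditional expectation onto a finite measurable partition of $\Omega$, such that $\|Pf\|_{L^{p_j}}\le\|f\|_{L^{p_j}}$ for all $f\in L^{p_j}$, $j=0,1$, $P$ maps $L^{p_0}+L^{p_1}$ into $L^{p_0}\cap L^{p_1}$, and $\|Pf-f\|_{L^{p_0}}<\varepsilon$ for all $f\in K$. -/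
open scoped ENNReal
open Filter Topology MeasureTheory Set Function

/-!
A compact subset of `L^p₀` is totally bounded, and each point of a finite net lies close to a
simple function (for `p₀ = ∞` one quantizes an essentially bounded function), so finitely many
simple functions `sⱼ` approximate every `f ∈ K` within `ε / 2`. Let `P` average over the pieces of
positive measure of the common refinement of their level sets. On each piece, Hölder's inequality
bounds the average by the `L^p` norm there, so `P` is an `L^p` contraction for every `p ≥ 1`; its
values are finite step functions, so it lands in every `L^p`; and it fixes each `sⱼ` almost
everywhere, whence `‖Pf - f‖ ≤ ‖P(f - sⱼ)‖ + ‖sⱼ - f‖ ≤ 2 ‖f - sⱼ‖ < ε`.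
-/

theorem eLpNorm_le_of_forall_restrict_le {α ι F G : Type*} [MeasurableSpace α] [Countable ι]
    [NormedAddCommGroup F] [NormedAddCommGroup G] {μ : Measure α} {E : ι → Set α}
    (hE : ∀ i, MeasurableSet (E i)) (hd : Pairwise (Disjoint on E)) {g : α → G} {f : α → F}
    (hg : g.support ⊆ ⋃ i, E i)
    {p : ℝ≥0∞} (h : ∀ i, eLpNorm g p (μ.restrict (E i)) ≤ eLpNorm f p (μ.restrict (E i))) :
    eLpNorm g p μ ≤ eLpNorm f p μ := by
  rcases eq_or_ne p 0 with rfl | hp0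
  · simp
  rcases eq_or_ne p ∞ with rfl | hptop
  · simp only [eLpNorm_exponent_top] at h ⊢
    have hpiece : ∀ i, ∀ᵐ ω ∂μ, ω ∈ E i → ‖g ω‖ₑ ≤ eLpNormEssSup g (μ.restrict (E i)) :=
      fun i => (ae_restrict_iff' (hE i)).1 ae_le_eLpNormEssSup
    refine eLpNormEssSup_le_of_ae_enorm_bound ?_
    filter_upwards [ae_all_iff.2 hpiece] with ω hω
    by_cases hωE : ω ∈ ⋃ i, E i
    · obtain ⟨i, hi⟩ := mem_iUnion.1 hωE
      exact (hω i hi).trans ((h i).trans (eLpNormEssSup_mono_measure _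
        (Measure.absolutelyContinuous_of_le Measure.restrict_le_self)))
    · simp [notMem_support.1 fun h => hωE (hg h)]
  have hpR : 0 < p.toReal := ENNReal.toReal_pos hp0 hptop
  simp only [eLpNorm_eq_lintegral_rpow_enorm_toReal hp0 hptop] at h ⊢
  refine ENNReal.rpow_le_rpow ?_ (by positivity)
  have hsupp : (fun ω => ‖g ω‖ₑ ^ p.toReal).support ⊆ ⋃ i, E i := by
    refine support_subset_iff'.2 fun ω hω => ?_
    simp [notMem_support.1 fun h => hω (hg h), hpR]
  calc ∫⁻ ω, ‖g ω‖ₑ ^ p.toReal ∂μ = ∑' i, ∫⁻ ω in E i, ‖g ω‖ₑ ^ p.toReal ∂μ := by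
        rw [← lintegral_iUnion hE hd, setLIntegral_eq_of_support_subset hsupp]
    _ ≤ ∑' i, ∫⁻ ω in E i, ‖f ω‖ₑ ^ p.toReal ∂μ :=
        ENNReal.tsum_le_tsum fun i => (ENNReal.rpow_le_rpow_iff (by positivity)).1 (h i)
    _ = ∫⁻ ω in ⋃ i, E i, ‖f ω‖ₑ ^ p.toReal ∂μ := (lintegral_iUnion hE hd _).symm
    _ ≤ ∫⁻ ω, ‖f ω‖ₑ ^ p.toReal ∂μ := setLIntegral_le_lintegral _ _

theorem eLpNorm_const_average_le {α F : Type*} [MeasurableSpace α] [NormedAddCommGroup F]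
    [NormedSpace ℝ F] {p : ℝ≥0∞} (hp : 1 ≤ p) (ν : Measure α) (f : α → F) :
    eLpNorm (fun _ => ⨍ x, f x ∂ν) p ν ≤ eLpNorm f p ν := by
  rcases eq_or_ne ν 0 with rfl | hν
  · simp
  rw [eLpNorm_const _ (zero_lt_one.trans_le hp).ne' hν]
  by_cases hf : AEStronglyMeasurable f ν
  swap
  · simp [average_eq, integral_non_aestronglyMeasurable hf]
  have hν0 : ν univ ≠ 0 := Measure.measure_univ_ne_zero.2 hν
  rcases eq_or_ne (ν univ) ∞ with hνtop | hνtop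
  · simp [average_eq, measureReal_def, hνtop]
  calc ‖⨍ x, f x ∂ν‖ₑ * ν univ ^ (1 / p.toReal)
      ≤ (ν univ)⁻¹ * eLpNorm f 1 ν * ν univ ^ (1 / p.toReal) := by
        rw [average_eq', eLpNorm_one_eq_lintegral_enorm]
        gcongr
        exact (enorm_integral_le_lintegral_enorm _).trans_eq (lintegral_smul_measure _ _)
    _ ≤ (ν univ)⁻¹ * (eLpNorm f p ν * ν univ ^ (1 - 1 / p.toReal)) *
          ν univ ^ (1 / p.toReal) := by
        gcongr
        simpa using eLpNorm_le_eLpNorm_mul_rpow_measure_univ hp hf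
    _ = eLpNorm f p ν *
          ((ν univ)⁻¹ * (ν univ ^ (1 - 1 / p.toReal) * ν univ ^ (1 / p.toReal))) := by
        ring
    _ = eLpNorm f p ν := by
        rw [← ENNReal.rpow_add _ _ hν0 hνtop, sub_add_cancel, ENNReal.rpow_one,
          ENNReal.inv_mul_cancel hν0 hνtop, mul_one]

section PartitionAverage

variable {α ι F : Type*} [MeasurableSpace α] [Fintype ι] [NormedAddCommGroup F]
  [NormedSpace ℝ F] {μ : Measure α} {E : ι → Set α}

noncomputable def partitionAverage (μ : Measure α) (E : ι → Set α) (f : α → F) : α → F :=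
  ∑ i, (E i).indicator fun _ => ⨍ x in E i, f x ∂μ

theorem partitionAverage_apply_of_mem (hd : Pairwise (Disjoint on E)) (f : α → F) {i : ι}
    {ω : α} (hω : ω ∈ E i) : partitionAverage μ E f ω = ⨍ x in E i, f x ∂μ := by
  rw [partitionAverage, Finset.sum_apply, Finset.sum_eq_single i, indicator_of_mem hω]
  · exact fun j _ hji => indicator_of_notMem (fun hωj => disjoint_left.1 (hd hji) hωj hω) _
  · simp

theorem support_partitionAverage_subset (f : α → F) :
    (partitionAverage μ E f).support ⊆ ⋃ i, E i := by
  refine support_subset_iff'.2 fun ω hω => ?_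
  rw [partitionAverage, Finset.sum_apply]
  exact Finset.sum_eq_zero fun i _ =>
    indicator_of_notMem (fun h => hω (mem_iUnion_of_mem i h)) _

theorem memLp_partitionAverage (hE : ∀ i, MeasurableSet (E i)) (hfin : ∀ i, μ (E i) ≠ ∞)
    (p : ℝ≥0∞) (f : α → F) : MemLp (partitionAverage μ E f) p μ :=
  memLp_finsetSum' _ fun i _ => memLp_indicator_const p (hE i) _ (Or.inr (hfin i))

theorem eLpNorm_partitionAverage_le {p : ℝ≥0∞} (hp : 1 ≤ p) (hE : ∀ i, MeasurableSet (E i))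
    (hd : Pairwise (Disjoint on E)) (f : α → F) :
    eLpNorm (partitionAverage μ E f) p μ ≤ eLpNorm f p μ := by
  refine eLpNorm_le_of_forall_restrict_le hE hd (support_partitionAverage_subset f) fun i => ?_
  calc eLpNorm (partitionAverage μ E f) p (μ.restrict (E i))
      = eLpNorm (fun _ => ⨍ x in E i, f x ∂μ) p (μ.restrict (E i)) :=
        eLpNorm_congr_ae <| (ae_restrict_iff' (hE i)).2 <|
          Eventually.of_forall fun _ => partitionAverage_apply_of_mem hd f
    _ ≤ eLpNorm f p (μ.restrict (E i)) := eLpNorm_const_average_le hp _ f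

theorem partitionAverage_sub {f g : α → F} (hf : Integrable f μ) (hg : Integrable g μ) :
    partitionAverage μ E (f - g) = partitionAverage μ E f - partitionAverage μ E g := by
  ext ω
  simp only [partitionAverage, Finset.sum_apply, Pi.sub_apply, ← Finset.sum_sub_distrib,
    setAverage_eq, integral_sub hf.integrableOn hg.integrableOn, smul_sub, indicator_sub]

theorem partitionAverage_ae_eq_self [CompleteSpace F] (hE : ∀ i, MeasurableSet (E i))
    (hd : Pairwise (Disjoint on E)) (hpos : ∀ i, μ (E i) ≠ 0) (hfin : ∀ i, μ (E i) ≠ ∞)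
    (hcover : ∀ᵐ ω ∂μ, ∃ i, ω ∈ E i) {s : α → F}
    (hconst : ∀ i, ∀ x ∈ E i, ∀ y ∈ E i, s x = s y) : partitionAverage μ E s =ᵐ[μ] s := by
  filter_upwards [hcover] with ω ⟨i, hω⟩
  rw [partitionAverage_apply_of_mem hd s hω,
    setAverage_congr_fun (hE i) (Eventually.of_forall fun x hx => hconst i x hx ω hω),
    setAverage_const (hpos i) (hfin i)]

theorem eLpNorm_partitionAverage_sub_self_le [CompleteSpace F] {p : ℝ≥0∞} (hp : 1 ≤ p)
    (hE : ∀ i, MeasurableSet (E i)) (hd : Pairwise (Disjoint on E)) (hpos : ∀ i, μ (E i) ≠ 0)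
    (hfin : ∀ i, μ (E i) ≠ ∞) (hcover : ∀ᵐ ω ∂μ, ∃ i, ω ∈ E i) {f s : α → F}
    (hf : Integrable f μ) (hs : Integrable s μ)
    (hconst : ∀ i, ∀ x ∈ E i, ∀ y ∈ E i, s x = s y) :
    eLpNorm (partitionAverage μ E f - f) p μ ≤ 2 * eLpNorm (f - s) p μ := by
  have hdecomp : partitionAverage μ E f - f =ᵐ[μ] partitionAverage μ E (f - s) - (f - s) := by
    filter_upwards [partitionAverage_ae_eq_self hE hd hpos hfin hcover hconst] with ω hω
    simp [partitionAverage_sub hf hs, hω]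
  calc eLpNorm (partitionAverage μ E f - f) p μ
      = eLpNorm (partitionAverage μ E (f - s) - (f - s)) p μ := eLpNorm_congr_ae hdecomp
    _ ≤ eLpNorm (partitionAverage μ E (f - s)) p μ + eLpNorm (f - s) p μ :=
        eLpNorm_sub_le (memLp_partitionAverage hE hfin p _).1 (hf.1.sub hs.1) hp
    _ ≤ eLpNorm (f - s) p μ + eLpNorm (f - s) p μ := by
        gcongr
        exact eLpNorm_partitionAverage_le hp hE hd _
    _ = 2 * eLpNorm (f - s) p μ := (two_mul _).symm

end PartitionAverage

section Approximation

variable {α : Type*} [MeasurableSpace α] {μ : Measure α} {p : ℝ≥0∞}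

theorem exists_simpleFunc_abs_sub_lt (R : ℝ) {r : ℝ} (hr : 0 < r) :
    ∃ q : SimpleFunc ℝ ℝ, ∀ x, |x| ≤ R → |x - q x| < r := by
  set q : ℝ → ℝ := (Icc (-R) R).indicator fun x => r * ⌊x / r⌋
  have hq : Measurable q := by
    refine Measurable.indicator ?_ measurableSet_Icc
    fun_prop
  have hrange : (range q).Finite := by
    refine ((finite_Icc ⌊-R / r⌋ ⌊R / r⌋).image fun z : ℤ => r * z).insert 0 |>.subset ?_
    rintro _ ⟨x, rfl⟩
    by_cases hx : x ∈ Icc (-R) R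
    · exact Or.inr ⟨⌊x / r⌋, ⟨Int.floor_le_floor (div_le_div_of_nonneg_right hx.1 hr.le),
        Int.floor_le_floor (div_le_div_of_nonneg_right hx.2 hr.le)⟩,
        (indicator_of_mem hx (fun x => r * ⌊x / r⌋)).symm⟩
    · exact Or.inl (indicator_of_notMem hx _)
  refine ⟨⟨q, fun _ => hq (measurableSet_singleton _), hrange⟩, fun x hx => ?_⟩
  have hfract : x - r * ⌊x / r⌋ = r * Int.fract (x / r) := by
    rw [Int.fract, mul_sub, mul_div_cancel₀ _ hr.ne']
  have hqx : q x = r * ⌊x / r⌋ := indicator_of_mem (show x ∈ Icc (-R) R from abs_le.1 hx) _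
  show |x - q x| < r
  rw [hqx, hfract, abs_of_nonneg (by positivity)]
  exact mul_lt_of_lt_one_right hr (Int.fract_lt_one _)

theorem MeasureTheory.MemLp.exists_simpleFunc_eLpNorm_top_sub_lt {g : α → ℝ} (hg : MemLp g ∞ μ)
    {δ : ℝ≥0∞} (hδ : δ ≠ 0) : ∃ s : SimpleFunc α ℝ, eLpNorm (g - ⇑s) ∞ μ < δ := by
  obtain ⟨r, -, hr, hrδ⟩ := ENNReal.lt_iff_exists_real_btwn.1 (pos_iff_ne_zero.2 hδ)
  obtain ⟨q, hq⟩ := exists_simpleFunc_abs_sub_lt (lpNorm g ∞ μ) (ENNReal.ofReal_pos.1 hr)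
  refine ⟨q.comp _ hg.1.stronglyMeasurable_mk.measurable,
    (eLpNorm_le_of_ae_bound (C := r) ?_).trans_lt ?_⟩
  · filter_upwards [ae_le_lpNorm_exponent_top hg, hg.1.ae_eq_mk] with x hx hmk
    rw [Real.norm_eq_abs] at hx
    simpa [hmk] using (hq _ (hmk ▸ hx)).le
  · simpa using hrδ

theorem MeasureTheory.MemLp.exists_simpleFunc_eLpNorm_sub_lt_real {g : α → ℝ}
    (hg : MemLp g p μ) {δ : ℝ≥0∞} (hδ : δ ≠ 0) :
    ∃ s : SimpleFunc α ℝ, eLpNorm (g - ⇑s) p μ < δ := by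
  rcases eq_or_ne p ∞ with rfl | hp
  · exact hg.exists_simpleFunc_eLpNorm_top_sub_lt hδ
  · obtain ⟨s, hs, -⟩ := hg.exists_simpleFunc_eLpNorm_sub_lt hp hδ
    exact ⟨s, hs⟩

end Approximation

section Net

variable {α E : Type*} [MeasurableSpace α] [NormedAddCommGroup E] {μ : Measure α} {p : ℝ≥0∞}

def IsSeqCompactLp (K : Set (α → E)) (p : ℝ≥0∞) (μ : Measure α) : Prop :=
  ∀ u : ℕ → α → E, (∀ n, u n ∈ K) →
    ∃ f ∈ K, ∃ σ : ℕ → ℕ, StrictMono σ ∧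
      Tendsto (fun n => eLpNorm (u (σ n) - f) p μ) atTop (𝓝 0)

theorem IsSeqCompactLp.exists_finset_eLpNorm_sub_lt {K : Set (α → E)}
    (hK : IsSeqCompactLp K p μ) (hp : 1 ≤ p) (hmeas : ∀ f ∈ K, AEStronglyMeasurable f μ)
    {δ : ℝ≥0∞} (hδ : δ ≠ 0) :
    ∃ t : Finset (α → E), ↑t ⊆ K ∧ ∀ f ∈ K, ∃ g ∈ t, eLpNorm (f - g) p μ < δ := by
  by_contra! hsep
  obtain ⟨u, huK, hu⟩ := exists_seq_of_forall_finset_exists (· ∈ K)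
    (fun g f => δ ≤ eLpNorm (f - g) p μ) hsep
  obtain ⟨f, hfK, σ, hσ, hlim⟩ := hK u huK
  obtain ⟨N, hN⟩ := eventually_atTop.1 (hlim.eventually_lt_const (ENNReal.half_pos hδ))
  have hmeas_sub : ∀ n, AEStronglyMeasurable (u (σ n) - f) μ :=
    fun n => (hmeas _ (huK _)).sub (hmeas f hfK)
  refine lt_irrefl δ ?_
  calc δ ≤ eLpNorm (u (σ (N + 1)) - u (σ N)) p μ := hu _ _ (hσ N.lt_succ_self)
    _ = eLpNorm ((u (σ (N + 1)) - f) - (u (σ N) - f)) p μ := by rw [sub_sub_sub_cancel_right]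
    _ ≤ eLpNorm (u (σ (N + 1)) - f) p μ + eLpNorm (u (σ N) - f) p μ :=
        eLpNorm_sub_le (hmeas_sub _) (hmeas_sub _) hp
    _ < δ / 2 + δ / 2 := ENNReal.add_lt_add (hN _ N.le_succ) (hN _ le_rfl)
    _ = δ := ENNReal.add_halves δ

end Net

theorem IsSeqCompactLp.exists_finset_simpleFunc_eLpNorm_sub_lt {α : Type*} [MeasurableSpace α]
    {μ : Measure α} {p : ℝ≥0∞} {K : Set (α → ℝ)} (hK : IsSeqCompactLp K p μ) (hp : 1 ≤ p)
    (hmem : ∀ f ∈ K, MemLp f p μ) {δ : ℝ≥0∞} (hδ : δ ≠ 0) :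
    ∃ t : Finset (SimpleFunc α ℝ), ∀ f ∈ K, ∃ s ∈ t, eLpNorm (f - ⇑s) p μ < δ := by
  classical
  have hδ2 : δ / 2 ≠ 0 := (ENNReal.half_pos hδ).ne'
  obtain ⟨t, htK, hnet⟩ := hK.exists_finset_eLpNorm_sub_lt hp (fun f hf => (hmem f hf).1) hδ2
  choose! s hs using fun g (hg : g ∈ K) =>
    (hmem g hg).exists_simpleFunc_eLpNorm_sub_lt_real hδ2
  refine ⟨t.image s, fun f hf => ?_⟩
  obtain ⟨g, hgt, hfg⟩ := hnet f hf
  refine ⟨s g, Finset.mem_image_of_mem s hgt, ?_⟩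
  calc eLpNorm (f - ⇑(s g)) p μ = eLpNorm ((f - g) + (g - ⇑(s g))) p μ := by
        rw [sub_add_sub_cancel]
    _ ≤ eLpNorm (f - g) p μ + eLpNorm (g - ⇑(s g)) p μ :=
        eLpNorm_add_le ((hmem f hf).1.sub (hmem g (htK hgt)).1)
          ((hmem g (htK hgt)).1.sub (s g).aestronglyMeasurable) hp
    _ < δ / 2 + δ / 2 := ENNReal.add_lt_add hfg (hs g (htK hgt))
    _ = δ := ENNReal.add_halves δ

section Partition

variable {α β : Type*} [MeasurableSpace α]

theorem ae_measure_preimage_singleton_ne_zero (μ : Measure α) {S : α → β}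
    (hS : (range S).Countable) : ∀ᵐ ω ∂μ, μ (S ⁻¹' {S ω}) ≠ 0 := by
  have hnull : {ω | ¬μ (S ⁻¹' {S ω}) ≠ 0} = S ⁻¹' {v ∈ range S | μ (S ⁻¹' {v}) = 0} := by
    ext ω
    simp
  rw [ae_iff, hnull, measure_preimage_eq_zero_iff_of_countable (hS.mono (sep_subset _ _))]
  exact fun v hv => hv.2

theorem exists_fin_partition_of_fibers [MeasurableSpace β] [MeasurableSingletonClass β]
    (μ : Measure α) {S : α → β} (hS : Measurable S) (hfin : (range S).Finite) :
    ∃ (n : ℕ) (E : Fin n → Set α), (∀ i, MeasurableSet (E i)) ∧ Pairwise (Disjoint on E) ∧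
      (∀ i, μ (E i) ≠ 0) ∧ (∀ᵐ ω ∂μ, ∃ i, ω ∈ E i) ∧ ∀ i, ∀ x ∈ E i, ∀ y ∈ E i, S x = S y := by
  classical
  set T := hfin.toFinset.filter fun v => μ (S ⁻¹' {v}) ≠ 0
  refine ⟨T.card, fun i => S ⁻¹' {(T.equivFin.symm i : β)},
    fun i => hS (measurableSet_singleton _), fun i j hij => ?_,
    fun i => (Finset.mem_filter.1 (T.equivFin.symm i).2).2, ?_, ?_⟩
  · exact Disjoint.preimage S (disjoint_singleton.2 fun h =>
      hij (T.equivFin.symm.injective (Subtype.ext h)))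
  · filter_upwards [ae_measure_preimage_singleton_ne_zero μ hfin.countable] with ω hω
    exact ⟨T.equivFin ⟨S ω, Finset.mem_filter.2 ⟨hfin.mem_toFinset.2 (mem_range_self ω), hω⟩⟩,
      by simp⟩
  · intro i x hx y hy
    rw [mem_preimage, mem_singleton_iff] at hx hy
    rw [hx, hy]

theorem exists_fin_partition_forall_simpleFunc_eq [MeasurableSpace β]
    [MeasurableSingletonClass β] (μ : Measure α) (t : Finset (SimpleFunc α β)) :
    ∃ (n : ℕ) (E : Fin n → Set α), (∀ i, MeasurableSet (E i)) ∧ Pairwise (Disjoint on E) ∧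
      (∀ i, μ (E i) ≠ 0) ∧ (∀ᵐ ω ∂μ, ∃ i, ω ∈ E i) ∧
      ∀ i, ∀ s ∈ t, ∀ x ∈ E i, ∀ y ∈ E i, s x = s y := by
  let S : α → t → β := fun ω s => s.1 ω
  have hS : Measurable S := measurable_pi_lambda _ fun s => s.1.measurable
  have hfin : (range S).Finite := by
    refine (Set.Finite.pi fun s : t => s.1.finite_range).subset ?_
    rintro _ ⟨ω, rfl⟩ s -
    exact mem_range_self ω
  obtain ⟨n, E, hE, hd, hpos, hcover, hfib⟩ := exists_fin_partition_of_fibers μ hS hfin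
  exact ⟨n, E, hE, hd, hpos, hcover,
    fun i s hs x hx y hy => congrFun (hfib i x hx y hy) ⟨s, hs⟩⟩

end Partition

/-- the couple `(L^{p0}, L^{p1})` over a finite measure space satisfies
Persson's condition (H), via conditional expectation onto a finite measurable
partition: for each `L^{p0}`-compact set `K` (stated sequentially via `eLpNorm`)
and each `ε > 0` there is such a partition whose associated averaging operator `P`
is an `L^{p_j}`-contraction, maps `L^{p0} + L^{p1}` into `L^{p0} ∩ L^{p1}`, and
approximates the identity on `K` within `ε` in `L^{p0}`. -/
theorem stmt16 {Ω : Type*} [MeasurableSpace Ω] (μ : Measure Ω) [IsFiniteMeasure μ]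
    (p0 p1 : ℝ≥0∞) (hp0 : 1 ≤ p0) (hp1 : 1 ≤ p1)
    (K : Set (Ω → ℝ)) (hKmem : ∀ f ∈ K, MemLp f p0 μ)
    (hKcpt : ∀ u : ℕ → (Ω → ℝ), (∀ n, u n ∈ K) →
      ∃ f ∈ K, ∃ σ : ℕ → ℕ, StrictMono σ ∧
        Tendsto (fun n => eLpNorm (u (σ n) - f) p0 μ) atTop (𝓝 0))
    (ε : ℝ) (hε : 0 < ε) :
    ∃ (n : ℕ) (E : Fin n → Set Ω),
      (∀ i, MeasurableSet (E i)) ∧ Pairwise (Function.onFun Disjoint E) ∧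
      (∀ i, 0 < μ (E i)) ∧
      (let P : (Ω → ℝ) → Ω → ℝ := fun f ω =>
        ∑ i, (E i).indicator (fun _ => (∫ x in E i, f x ∂μ) / (μ (E i)).toReal) ω
      (∀ f : Ω → ℝ, eLpNorm (P f) p0 μ ≤ eLpNorm f p0 μ) ∧
      (∀ f : Ω → ℝ, eLpNorm (P f) p1 μ ≤ eLpNorm f p1 μ) ∧
      (∀ f : Ω → ℝ, (MemLp f p0 μ ∨ MemLp f p1 μ) →
        MemLp (P f) p0 μ ∧ MemLp (P f) p1 μ) ∧
      (∀ f ∈ K, eLpNorm (P f - f) p0 μ < ENNReal.ofReal ε)) := by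
  have hδ : ENNReal.ofReal ε / 2 ≠ 0 := (ENNReal.half_pos (ENNReal.ofReal_pos.2 hε).ne').ne'
  obtain ⟨t, hnet⟩ := IsSeqCompactLp.exists_finset_simpleFunc_eLpNorm_sub_lt hKcpt hp0 hKmem hδ
  obtain ⟨n, E, hE, hd, hpos, hcover, hconst⟩ := exists_fin_partition_forall_simpleFunc_eq μ t
  have hfin : ∀ i, μ (E i) ≠ ∞ := fun i => measure_ne_top μ _
  have hP : ∀ f : Ω → ℝ,
      (fun ω => ∑ i, (E i).indicator (fun _ => (∫ x in E i, f x ∂μ) / (μ (E i)).toReal) ω)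
        = partitionAverage μ E f := by
    intro f
    ext ω
    simp only [partitionAverage, Finset.sum_apply, setAverage_eq, measureReal_def, smul_eq_mul,
      inv_mul_eq_div]
  refine ⟨n, E, hE, hd, fun i => pos_iff_ne_zero.2 (hpos i), ?_⟩
  simp only [hP]
  refine ⟨eLpNorm_partitionAverage_le hp0 hE hd, eLpNorm_partitionAverage_le hp1 hE hd,
    fun f _ => ⟨memLp_partitionAverage hE hfin p0 f, memLp_partitionAverage hE hfin p1 f⟩,
    fun f hf => ?_⟩
  obtain ⟨s, hst, hfs⟩ := hnet f hf
  calc eLpNorm (partitionAverage μ E f - f) p0 μ ≤ 2 * eLpNorm (f - ⇑s) p0 μ :=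
        eLpNorm_partitionAverage_sub_self_le hp0 hE hd hpos hfin hcover
          ((hKmem f hf).integrable hp0) s.integrable_of_isFiniteMeasure fun i => hconst i s hst
    _ < 2 * (ENNReal.ofReal ε / 2) :=
        ENNReal.mul_lt_mul_right two_ne_zero ENNReal.ofNat_ne_top hfs
    _ = ENNReal.ofReal ε := ENNReal.mul_div_cancel two_ne_zero ENNReal.ofNat_ne_top
end
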